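/- arXiv:2403.12919 — 4 statements merged into one kernel-verified Lean document; each statement's English description precedes it below -/
import Mathlib

section
/- Let t ≥ 3 be an integer and let ε, δ ∈ (0,1) satisfy ε < 1/2 and (δ−ε)^{t−1} > (t+1)ε. Let G be a K_t-free finite simple graph, let V₁, …, V_r be pairwise disjoint nonempty vertex subsets of G, and suppose α(G) < 2ε·min_{i∈S₁}|V_i|. Suppose S₂ ⊆ S₁ ⊆ [r] are index sets such that: (i) for all distinct i,j ∈ S₁ the pair (V_i,V_j) is ε-regular with edge density d(V_i,V_j) > δ; and (ii) for all distinct i,j ∈ S₂ the edge density satisfies d(V_i,V_j) > 1/2 + δ. Then G contains a clique of order |S₁| + |S₂|; in particular, |S₁| + |S₂| < t. -/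
open Filter

structure WeightedGraph (V : Type) [Fintype V] where
  vw : V → ℝ
  ew : V → V → ℝ
  vw_nonneg : ∀ v, 0 ≤ vw v
  vw_le_one : ∀ v, vw v ≤ 1
  vw_sum : ∑ v, vw v = 1
  ew_nonneg : ∀ u v, 0 ≤ ew u v
  ew_le_one : ∀ u v, ew u v ≤ 1
  ew_symm : ∀ u v, ew u v = ew v u
  ew_self : ∀ v, ew v v = 0

namespace WeightedGraph

variable {V : Type} [Fintype V]

/-- The `K_m`-density of a weighted graph. -/
noncomputable def density (R : WeightedGraph V) (m : ℕ) : ℝ :=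
  ∑ σ : Fin m → V, (∏ i, R.vw (σ i)) *
    ∏ p ∈ Finset.univ.filter (fun p : Fin m × Fin m => p.1 < p.2), R.ew (σ p.1) (σ p.2)

/-- The simple graph `R_{>α}` of edges of weight greater than `α`. -/
def gtGraph (R : WeightedGraph V) (α : ℝ) : SimpleGraph V where
  Adj u v := u ≠ v ∧ α < R.ew u v
  symm := by
    constructor
    intro u v h
    refine ⟨h.1.symm, ?_⟩
    rw [R.ew_symm v u]
    exact h.2
  loopless := by constructor; intro v h; exact h.1 rfl

/-- `R` is `𝒦_t`-free. -/
def KtFree (R : WeightedGraph V) (t : ℕ) : Prop :=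
  ¬ ∃ S₁ S₂ : Finset V, S₂ ⊆ S₁ ∧ 1 ≤ S₂.card ∧ S₁.card + S₂.card = t ∧
      (R.gtGraph 0).IsClique (S₁ : Set V) ∧ (R.gtGraph (1/2)).IsClique (S₂ : Set V)

/-- The conditions (A1)–(A5) on a partition function `part`, for a `(b,a)`-partition
with the number of parts `a` implicit in the type of `part`. -/
def IsBAPartition (R : WeightedGraph V) (s : ℕ) {a : ℕ} (part : V → Fin a) : Prop :=
  Function.Surjective part ∧
  (∀ u v : V, u ≠ v → R.ew u v = 1/2 ∨ R.ew u v = 1) ∧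
  (∀ u v : V, u ≠ v → (R.ew u v = 1/2 ↔ part u = part v)) ∧
  (∀ u v : V, part u = part v → R.vw u = R.vw v) ∧
  (∀ i j : Fin a, (Finset.univ.filter fun x => part x = i).card ≤
      (Finset.univ.filter fun x => part x = j).card + 1) ∧
  (∀ u v : V, (Finset.univ.filter fun x => part x = part v).card ≤
      (Finset.univ.filter fun x => part x = part u).card → R.vw u ≤ R.vw v) ∧
  ((a = 1 ∧ ∀ i : Fin a, (Finset.univ.filter fun x => part x = i).card = s) ∨
   (2 ≤ a ∧ ∀ i : Fin a, (Finset.univ.filter fun x => part x = i).card ≤ s - 1))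

/-- `R` admits a `(b,a)`-partition (with clique parameter `s`). -/
def AdmitsPartition (R : WeightedGraph V) (s b a : ℕ) : Prop :=
  Fintype.card V = b ∧ 1 ≤ a ∧ ∃ part : V → Fin a, R.IsBAPartition s part

end WeightedGraph

/-- `π_s(𝒦_t)`: the supremum of the `K_s`-density over all `𝒦_t`-free weighted graphs. -/
noncomputable def piSup (s t : ℕ) : ℝ :=
  sSup {x : ℝ | ∃ (V : Type) (_ : Fintype V) (R : WeightedGraph V),
    R.KtFree t ∧ R.density s = x}

/-- The independence number of a simple graph. -/
noncomputable def indepNum {α : Type*} (G : SimpleGraph α) : ℕ :=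
  sSup {k : ℕ | ∃ S : Finset α, (Gᶜ).IsNClique k S}

/-- The number `N(K_s, G)` of `s`-cliques of `G`. -/
noncomputable def cliqueCount {α : Type*} (G : SimpleGraph α) (s : ℕ) : ℕ :=
  Set.ncard {S : Finset α | G.IsNClique s S}

/-- The Ramsey–Turán number `RT(n, K_s, K_t, ℓ)`. -/
noncomputable def RT (n s t : ℕ) (ℓ : ℝ) : ℕ :=
  sSup {N : ℕ | ∃ G : SimpleGraph (Fin n),
    G.CliqueFree t ∧ ((indepNum G : ℝ) < ℓ) ∧ N = cliqueCount G s}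

/-!
Greedy embedding of the clique, one index of `S₁` at a time, with the indices of `S₂` last.
Every remaining index `j` keeps a candidate set `C j ⊆ V j` that has lost a factor `δ - ε` per
embedded index. By `ε`-regularity all but `ε |V i|` vertices of `C i` per other index are
typical, i.e. have at least `(d(V i, V j) - ε) |C j|` neighbours in `C j`; as
`(δ - ε)^(t-1) > (t + 1) ε`, more than `2 ε |V i| > α(G)` typical vertices remain. For
`i ∈ S₁ \ S₂` one typical vertex is embedded; for `i ∈ S₂` the typical vertices span an edge
`uv`, and densities above `1/2 + δ` leave at least `(δ - ε) |C j|` common neighbours of `u, v`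
in each `C j`. So `i` contributes one vertex, or two when `i ∈ S₂`.
The budget `(δ - ε)^(t-1)` needs `|S₁| ≤ t`, which holds because `t` indices of `S₁` alone
would already yield a `K_t`.
-/

open Finset

theorem Finset.card_filter_add_card_filter_le {α : Type*} [DecidableEq α] (s : Finset α)
    (p q : α → Prop) [DecidablePred p] [DecidablePred q] :
    #{x ∈ s | p x} + #{x ∈ s | q x} ≤ #{x ∈ s | p x ∧ q x} + #s := by
  rw [filter_and, ← card_union_add_card_inter, add_comm]
  gcongr
  exact union_subset (filter_subset _ _) (filter_subset _ _)

theorem exists_adj_of_indepNum_lt_card {α : Type*} [Finite α] {G : SimpleGraph α} {s : Finset α}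
    (h : indepNum G < #s) : ∃ u ∈ s, ∃ v ∈ s, G.Adj u v := by
  by_contra! hs
  have hclique : Gᶜ.IsClique (s : Set α) := fun u hu v hv huv => ⟨huv, hs u hu v hv⟩
  exact (hclique.card_le_cliqueNum).not_gt h

namespace SimpleGraph

variable {α : Type*} {G : SimpleGraph α} [DecidableRel G.Adj]

theorem card_interedges_eq_sum_card_filter_adj (s t : Finset α) :
    #(G.interedges s t) = ∑ x ∈ s, #{y ∈ t | G.Adj x y} := by
  rw [interedges_def, card_filter, sum_product]
  simp only [card_filter]

theorem IsUniform.card_filter_card_filter_adj_lt_le {ε : ℝ} {s t C : Finset α}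
    (hG : G.IsUniform ε s t) (hC : C ⊆ t) (hCcard : #t * ε ≤ #C) :
    #{x ∈ s | #{y ∈ C | G.Adj x y} < ((G.edgeDensity s t : ℝ) - ε) * #C} ≤ #s * ε := by
  set B := {x ∈ s | #{y ∈ C | G.Adj x y} < ((G.edgeDensity s t : ℝ) - ε) * #C}
  by_contra! hB
  have hBne : B.Nonempty := card_pos.1 <| by
    have := mul_nonneg (Nat.cast_nonneg (α := ℝ) #s) hG.pos.le
    exact_mod_cast this.trans_lt hB
  have hsum : (#(G.interedges B C) : ℝ) < ((G.edgeDensity s t : ℝ) - ε) * #C * #B := by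
    rw [card_interedges_eq_sum_card_filter_adj]
    push_cast
    calc ∑ x ∈ B, (#{y ∈ C | G.Adj x y} : ℝ)
        < ∑ _x ∈ B, ((G.edgeDensity s t : ℝ) - ε) * #C :=
          sum_lt_sum_of_nonempty hBne fun x hx => (mem_filter.1 hx).2
      _ = ((G.edgeDensity s t : ℝ) - ε) * #C * #B := by rw [sum_const, nsmul_eq_mul, mul_comm]
  have hCpos : (0 : ℝ) < #C := by
    obtain ⟨x, hx⟩ := hBne
    have hx := (Nat.cast_nonneg _).trans_lt (mem_filter.1 hx).2
    exact (Nat.cast_nonneg _).lt_of_ne fun h => by simp [← h] at hx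
  have hunif := hG (filter_subset _ s) hC hB.le hCcard
  rw [← card_interedges_div_card, abs_sub_lt_iff] at hunif
  push_cast at hunif
  have hlow := hunif.2
  rw [sub_lt_comm, lt_div_iff₀ (by positivity)] at hlow
  linarith

end SimpleGraph

theorem lt_of_lt_sub_pow {ε δ : ℝ} {n : ℕ} (hn : n ≠ 0) (hδ : 0 ≤ δ) (hε : ε ≤ 1)
    (h : ε < (δ - ε) ^ n) : ε < δ := by
  by_contra! hδε
  have habs : |δ - ε| = ε - δ := by rw [abs_sub_comm, abs_of_nonneg (sub_nonneg.2 hδε)]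
  have : (δ - ε) ^ n ≤ ε :=
    calc (δ - ε) ^ n ≤ |δ - ε| ^ n := (le_abs_self _).trans (abs_pow _ _).le
      _ = (ε - δ) ^ n := by rw [habs]
      _ ≤ ε - δ := pow_le_of_le_one (sub_nonneg.2 hδε) (by linarith) hn
      _ ≤ ε := by linarith
  exact this.not_gt h

theorem add_one_mul_le_pow_sub {ε x : ℝ} {n t : ℕ} (hε : 0 ≤ ε) (hx₀ : 0 ≤ x) (hx₁ : x ≤ 1)
    (h : ((t : ℝ) + 1) * ε < x ^ (t - 1)) (hn : 1 ≤ n) (hnt : n ≤ t) :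
    ((n : ℝ) + 1) * ε ≤ x ^ (t - n) :=
  calc ((n : ℝ) + 1) * ε ≤ ((t : ℝ) + 1) * ε := by gcongr
    _ ≤ x ^ (t - 1) := h.le
    _ ≤ x ^ (t - n) := pow_le_pow_of_le_one hx₀ hx₁ (by omega)

theorem pow_sub_card_erase {M ι : Type*} [Monoid M] [DecidableEq ι] (x : M) {T : Finset ι}
    {i : ι} {t : ℕ} (hi : i ∈ T) (hT : #T ≤ t) :
    x ^ (t - #(T.erase i)) = x * x ^ (t - #T) := by
  rw [card_erase_of_mem hi, ← pow_succ']
  have := card_pos.2 ⟨i, hi⟩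
  congr 1
  omega

section Embedding

variable {α ι : Type*} {G : SimpleGraph α} [DecidableRel G.Adj]
  {V C : ι → Finset α} {T : Finset ι} {ε δ β : ℝ} {i : ι}

def IsCandidateFamily (V : ι → Finset α) (T : Finset ι) (β : ℝ) (C : ι → Finset α) : Prop :=
  ∀ i ∈ T, C i ⊆ V i ∧ β * #(V i) ≤ #(C i)

theorem isCandidateFamily_self (hβ : β ≤ 1) : IsCandidateFamily V T β V :=
  fun _ _ => ⟨subset_rfl, mul_le_of_le_one_left (Nat.cast_nonneg _) hβ⟩

variable [DecidableEq ι]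

variable (G V ε) in
noncomputable def typicalSet (T : Finset ι) (C : ι → Finset α) (i : ι) : Finset α :=
  {x ∈ C i | ∀ j ∈ T.erase i,
    ((G.edgeDensity (V i) (V j) : ℝ) - ε) * #(C j) ≤ #{y ∈ C j | G.Adj x y}}

theorem typicalSet_subset : typicalSet G V ε T C i ⊆ C i := filter_subset _ _

theorem IsCandidateFamily.filter_adj (hC : IsCandidateFamily V T β C) {x : α}
    (hx : x ∈ typicalSet G V ε T C i)
    (hdens : ∀ j ∈ T.erase i, δ < (G.edgeDensity (V i) (V j) : ℝ)) (hεδ : ε ≤ δ) :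
    IsCandidateFamily V (T.erase i) ((δ - ε) * β) fun j => {y ∈ C j | G.Adj x y} := by
  intro j hj
  have hjT := mem_of_mem_erase hj
  refine ⟨(filter_subset _ _).trans (hC j hjT).1, ?_⟩
  calc (δ - ε) * β * #(V j) = (δ - ε) * (β * #(V j)) := mul_assoc _ _ _
    _ ≤ (δ - ε) * #(C j) := mul_le_mul_of_nonneg_left (hC j hjT).2 (sub_nonneg.2 hεδ)
    _ ≤ ((G.edgeDensity (V i) (V j) : ℝ) - ε) * #(C j) := by
        gcongr
        linarith [hdens j hj]
    _ ≤ #{y ∈ C j | G.Adj x y} := (mem_filter.1 hx).2 j hj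

variable [DecidableEq α]

theorem card_sub_mul_le_card_typicalSet
    (hreg : (T : Set ι).Pairwise fun i j => G.IsUniform ε (V i) (V j))
    (hC : IsCandidateFamily V T β C) (hi : i ∈ T) (hεβ : ε ≤ β) :
    #(C i) - #(T.erase i) * (#(V i) * ε) ≤ #(typicalSet G V ε T C i) := by
  set bad := fun j => {x ∈ V i |
    #{y ∈ C j | G.Adj x y} < ((G.edgeDensity (V i) (V j) : ℝ) - ε) * #(C j)}
  have hcover : C i ⊆ typicalSet G V ε T C i ∪ (T.erase i).biUnion bad := by
    intro x hx
    by_cases hxt : x ∈ typicalSet G V ε T C i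
    · exact mem_union_left _ hxt
    · simp only [typicalSet, mem_filter, hx, true_and, not_forall, not_le] at hxt
      obtain ⟨j, hj, hlow⟩ := hxt
      exact mem_union_right _ (mem_biUnion.2 ⟨j, hj, mem_filter.2 ⟨(hC i hi).1 hx, hlow⟩⟩)
  have hbad : ∀ j ∈ T.erase i, (#(bad j) : ℝ) ≤ #(V i) * ε := fun j hj => by
    have hjT := mem_of_mem_erase hj
    refine (hreg hi hjT (ne_of_mem_erase hj).symm).card_filter_card_filter_adj_lt_le
      (hC j hjT).1 ?_
    nlinarith [(hC j hjT).2, (Nat.cast_nonneg #(V j) : (0 : ℝ) ≤ _)]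
  calc (#(C i) : ℝ) - #(T.erase i) * (#(V i) * ε)
      ≤ #(typicalSet G V ε T C i) + #((T.erase i).biUnion bad) - #(T.erase i) * (#(V i) * ε) := by
        gcongr
        exact_mod_cast (card_le_card hcover).trans (card_union_le _ _)
    _ ≤ #(typicalSet G V ε T C i) + ∑ j ∈ T.erase i, (#(bad j) : ℝ)
          - #(T.erase i) * (#(V i) * ε) := by
        gcongr
        exact_mod_cast card_biUnion_le
    _ ≤ #(typicalSet G V ε T C i) := by
        have := sum_le_card_nsmul _ _ _ hbad
        rw [nsmul_eq_mul] at this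
        linarith

theorem indepNum_lt_card_typicalSet [Finite α]
    (hreg : (T : Set ι).Pairwise fun i j => G.IsUniform ε (V i) (V j))
    (hC : IsCandidateFamily V T β C) (hi : i ∈ T) (hε : 0 ≤ ε) (hβ : ((#T : ℝ) + 1) * ε ≤ β)
    (hα : (indepNum G : ℝ) < 2 * ε * #(V i)) :
    indepNum G < #(typicalSet G V ε T C i) := by
  have hT : (#(T.erase i) : ℝ) + 1 = #T := by exact_mod_cast card_erase_add_one hi
  rw [← hT] at hβ
  have htyp := card_sub_mul_le_card_typicalSet hreg hC hi (by nlinarith)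
  have hCi := (hC i hi).2
  have hβV := mul_le_mul_of_nonneg_right hβ (Nat.cast_nonneg (α := ℝ) #(V i))
  exact_mod_cast (show (indepNum G : ℝ) < #(typicalSet G V ε T C i) by linarith)

theorem IsCandidateFamily.filter_adj_and_adj (hC : IsCandidateFamily V T β C) {u v : α}
    (hu : u ∈ typicalSet G V ε T C i) (hv : v ∈ typicalSet G V ε T C i)
    (hdens : ∀ j ∈ T.erase i, 1 / 2 + δ < (G.edgeDensity (V i) (V j) : ℝ)) (hεδ : ε ≤ δ) :
    IsCandidateFamily V (T.erase i) ((δ - ε) * β)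
      fun j => {y ∈ C j | G.Adj u y ∧ G.Adj v y} := by
  intro j hj
  have hjT := mem_of_mem_erase hj
  refine ⟨(filter_subset _ _).trans (hC j hjT).1, ?_⟩
  have hcommon : (#{y ∈ C j | G.Adj u y} : ℝ) + #{y ∈ C j | G.Adj v y}
      ≤ #{y ∈ C j | G.Adj u y ∧ G.Adj v y} + #(C j) := by
    exact_mod_cast card_filter_add_card_filter_le (C j) (G.Adj u) (G.Adj v)
  have hβ := mul_le_mul_of_nonneg_left (hC j hjT).2 (sub_nonneg.2 hεδ)
  have hd : δ - ε ≤ 2 * ((G.edgeDensity (V i) (V j) : ℝ) - ε) - 1 := by linarith [hdens j hj]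
  nlinarith [(mem_filter.1 hu).2 j hj, (mem_filter.1 hv).2 j hj,
    mul_le_mul_of_nonneg_right hd (Nat.cast_nonneg (α := ℝ) #(C j))]

theorem biUnion_erase_filter_subset (p : α → Prop) [DecidablePred p] :
    (T.erase i).biUnion (fun j => {y ∈ C j | p y}) ⊆ T.biUnion C :=
  (biUnion_mono fun _ _ => filter_subset _ _).trans
    (biUnion_subset_biUnion_of_subset_left _ (erase_subset _ _))

theorem exists_isNClique_insert {x : α} {n : ℕ} (hi : i ∈ T) (hx : x ∈ C i)
    (h : ∃ K ⊆ (T.erase i).biUnion fun j => {y ∈ C j | G.Adj x y}, G.IsNClique n K) :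
    ∃ K ⊆ T.biUnion C, G.IsNClique (n + 1) K := by
  obtain ⟨K, hKsub, hK⟩ := h
  refine ⟨insert x K, insert_subset (subset_biUnion_of_mem C hi hx)
    (hKsub.trans (biUnion_erase_filter_subset _)), ?_⟩
  rw [← filter_biUnion] at hKsub
  exact hK.insert fun y hy => (mem_filter.1 (hKsub hy)).2

theorem exists_isNClique_insert_insert {u v : α} {n : ℕ} (hi : i ∈ T) (hu : u ∈ C i)
    (hv : v ∈ C i) (huv : G.Adj u v)
    (h : ∃ K ⊆ (T.erase i).biUnion fun j => {y ∈ C j | G.Adj u y ∧ G.Adj v y},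
      G.IsNClique n K) :
    ∃ K ⊆ T.biUnion C, G.IsNClique (n + 2) K := by
  obtain ⟨K, hKsub, hK⟩ := h
  refine ⟨insert u (insert v K), insert_subset (subset_biUnion_of_mem C hi hu) <|
    insert_subset (subset_biUnion_of_mem C hi hv) (hKsub.trans (biUnion_erase_filter_subset _)),
    ?_⟩
  rw [← filter_biUnion] at hKsub
  refine (hK.insert fun y hy => (mem_filter.1 (hKsub hy)).2.2).insert fun y hy => ?_
  obtain rfl | hy := mem_insert.1 hy
  · exact huv
  · exact (mem_filter.1 (hKsub hy)).2.1

-- At most `t - #T₁` indices have been embedded so far, each shrinking the candidate sets by a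
-- factor `δ - ε`.
theorem exists_isNClique_subset_biUnion [Finite α] {t : ℕ} (hε : 0 ≤ ε) (hεδ : ε ≤ δ) (hδ : δ ≤ 1)
    (hpow : ((t : ℝ) + 1) * ε < (δ - ε) ^ (t - 1)) {T₁ T₂ : Finset ι} (hT : T₂ ⊆ T₁)
    (hT₁ : #T₁ ≤ t) (hα : ∀ i ∈ T₁, (indepNum G : ℝ) < 2 * ε * #(V i))
    (hreg : (T₁ : Set ι).Pairwise fun i j =>
      G.IsUniform ε (V i) (V j) ∧ δ < (G.edgeDensity (V i) (V j) : ℝ))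
    (hdens : (T₂ : Set ι).Pairwise fun i j => 1 / 2 + δ < (G.edgeDensity (V i) (V j) : ℝ))
    (hC : IsCandidateFamily V T₁ ((δ - ε) ^ (t - #T₁)) C) :
    ∃ K ⊆ T₁.biUnion C, G.IsNClique (#T₁ + #T₂) K := by
  induction T₁ using Finset.strongInduction generalizing T₂ C with
  | H T₁ ih =>
  obtain rfl | ⟨i₀, hi₀⟩ := T₁.eq_empty_or_nonempty
  · exact ⟨∅, empty_subset _, by simp [subset_empty.1 hT]⟩
  have hlarge : ∀ i ∈ T₁, indepNum G < #(typicalSet G V ε T₁ C i) := fun i hi =>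
    indepNum_lt_card_typicalSet (hreg.imp fun _ _ h => h.1) hC hi hε
      (add_one_mul_le_pow_sub hε (sub_nonneg.2 hεδ) (by linarith) hpow
        (card_pos.2 ⟨i, hi⟩) hT₁) (hα i hi)
  have hrec : ∀ i ∈ T₁, ∀ {T₂' : Finset ι} {C' : ι → Finset α}, T₂' ⊆ T₁.erase i → T₂' ⊆ T₂ →
      IsCandidateFamily V (T₁.erase i) ((δ - ε) * (δ - ε) ^ (t - #T₁)) C' →
      ∃ K ⊆ (T₁.erase i).biUnion C', G.IsNClique (#(T₁.erase i) + #T₂') K :=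
    fun i hi T₂' C' h h' hC' => ih _ (erase_ssubset hi) h ((card_erase_le).trans hT₁)
      (fun j hj => hα j (mem_of_mem_erase hj)) (hreg.mono (coe_subset.2 (erase_subset _ _)))
      (hdens.mono (coe_subset.2 h')) (pow_sub_card_erase (δ - ε) hi hT₁ ▸ hC')
  by_cases hT₁₂ : T₁ ⊆ T₂
  · obtain rfl : T₂ = T₁ := hT.antisymm hT₁₂
    obtain ⟨u, hu, v, hv, huv⟩ := exists_adj_of_indepNum_lt_card (hlarge i₀ hi₀)
    have := card_erase_add_one hi₀
    rw [show #T₂ + #T₂ = #(T₂.erase i₀) + #(T₂.erase i₀) + 2 by omega]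
    exact exists_isNClique_insert_insert hi₀ (typicalSet_subset hu) (typicalSet_subset hv) huv <|
      hrec i₀ hi₀ subset_rfl (erase_subset _ _) <| hC.filter_adj_and_adj hu hv
        (fun j hj => hdens hi₀ (mem_of_mem_erase hj) (ne_of_mem_erase hj).symm) hεδ
  · obtain ⟨i, hi, hi₂⟩ := not_subset.1 hT₁₂
    obtain ⟨x, hx⟩ := card_pos.1 ((Nat.zero_le _).trans_lt (hlarge i hi))
    rw [← card_erase_add_one hi, add_right_comm]
    exact exists_isNClique_insert hi (typicalSet_subset hx) <|
      hrec i hi (subset_erase.2 ⟨hT, hi₂⟩) subset_rfl <| hC.filter_adj hx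
        (fun j hj => (hreg hi (mem_of_mem_erase hj) (ne_of_mem_erase hj).symm).2) hεδ

end Embedding

theorem clique_from_regular_pairs_general {α : Type} [Fintype α] [DecidableEq α]
    (t : ℕ) (ht : 3 ≤ t) (ε δ : ℝ)
    (hε0 : 0 < ε) (hε : ε < 1/2) (hδ0 : 0 < δ) (hδ1 : δ < 1)
    (hpow : ((t : ℝ) + 1) * ε < (δ - ε) ^ (t - 1))
    (G : SimpleGraph α) [DecidableRel G.Adj] (hG : G.CliqueFree t)
    (r : ℕ) (Vset : Fin r → Finset α)
    (S₁ S₂ : Finset (Fin r)) (hsub : S₂ ⊆ S₁)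
    (hα : ∀ i ∈ S₁, (indepNum G : ℝ) < 2 * ε * ((Vset i).card : ℝ))
    (hreg : ∀ i ∈ S₁, ∀ j ∈ S₁, i ≠ j →
      G.IsUniform ε (Vset i) (Vset j) ∧ δ < (G.edgeDensity (Vset i) (Vset j) : ℝ))
    (hdens : ∀ i ∈ S₂, ∀ j ∈ S₂, i ≠ j →
      1/2 + δ < (G.edgeDensity (Vset i) (Vset j) : ℝ)) :
    (∃ S : Finset α, G.IsNClique (S₁.card + S₂.card) S) ∧ S₁.card + S₂.card < t := by
  have hεδ : ε < δ := lt_of_lt_sub_pow (by omega) hδ0.le (by linarith)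
    ((le_mul_of_one_le_left hε0.le (by linarith [t.cast_nonneg (α := ℝ)])).trans_lt hpow)
  have hclique : ∀ T₁ ⊆ S₁, ∀ T₂ ⊆ T₁, T₂ ⊆ S₂ → #T₁ ≤ t →
      ∃ K, G.IsNClique (#T₁ + #T₂) K := fun T₁ h₁ T₂ h₂ h₂' hT₁ =>
    let ⟨K, _, hK⟩ := exists_isNClique_subset_biUnion hε0.le hεδ.le hδ1.le hpow h₂ hT₁
      (fun i hi => hα i (h₁ hi)) (Set.Pairwise.mono (coe_subset.2 h₁) hreg)
      (Set.Pairwise.mono (coe_subset.2 h₂') hdens)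
      (isCandidateFamily_self (pow_le_one₀ (sub_nonneg.2 hεδ.le) (by linarith)))
    ⟨K, hK⟩
  have hS₁ : #S₁ ≤ t := by
    by_contra! h
    obtain ⟨T, hT, hTcard⟩ := exists_subset_card_eq h.le
    obtain ⟨K, hK⟩ := hclique T hT ∅ (empty_subset _) (empty_subset _) hTcard.le
    exact hG K (by simpa [hTcard] using hK)
  obtain ⟨K, hK⟩ := hclique S₁ subset_rfl S₂ hsub subset_rfl hS₁
  exact ⟨⟨K, hK⟩, lt_of_not_ge fun h => hG.mono h K hK⟩

theorem clique_from_regular_pairs {α : Type} [Fintype α] [DecidableEq α]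
    (t : ℕ) (ht : 3 ≤ t) (ε δ : ℝ)
    (hε0 : 0 < ε) (hε : ε < 1/2) (hδ0 : 0 < δ) (hδ1 : δ < 1)
    (hpow : ((t : ℝ) + 1) * ε < (δ - ε) ^ (t - 1))
    (G : SimpleGraph α) [DecidableRel G.Adj] (hG : G.CliqueFree t)
    (r : ℕ) (Vset : Fin r → Finset α)
    (hdisj : ∀ i j : Fin r, i ≠ j → Disjoint (Vset i) (Vset j))
    (hne : ∀ i : Fin r, (Vset i).Nonempty)
    (S₁ S₂ : Finset (Fin r)) (hsub : S₂ ⊆ S₁)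
    (hα : ∀ i ∈ S₁, (indepNum G : ℝ) < 2 * ε * ((Vset i).card : ℝ))
    (hreg : ∀ i ∈ S₁, ∀ j ∈ S₁, i ≠ j →
      G.IsUniform ε (Vset i) (Vset j) ∧ δ < (G.edgeDensity (Vset i) (Vset j) : ℝ))
    (hdens : ∀ i ∈ S₂, ∀ j ∈ S₂, i ≠ j →
      1/2 + δ < (G.edgeDensity (Vset i) (Vset j) : ℝ)) :
    (∃ S : Finset α, G.IsNClique (S₁.card + S₂.card) S) ∧ S₁.card + S₂.card < t :=
  clique_from_regular_pairs_general t ht ε δ hε0 hε hδ0 hδ1 hpow G hG r Vset S₁ S₂ hsub hα hreg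
    hdens
end

section
/- Let R be a weighted graph on n ≥ 2 vertices containing two distinct vertices v₁, v₂ with edge weight w(v₁,v₂) = 0 and w(v₁)+w(v₂) > 0. For i ∈ {1,2}, let R'_i be the weighted graph on n−1 vertices obtained from R by deleting v_{3−i} and increasing the vertex weight of v_i to w(v₁)+w(v₂) (all other vertex weights and all edge weights among remaining vertices unchanged). Then, with α_i = w(v_i)/(w(v₁)+w(v₂)), one has α₁·d_{K_s}(R'_1) + α₂·d_{K_s}(R'_2) = d_{K_s}(R) for every integer s ≥ 1; moreover, if R is 𝒦_t-free then both R'_1 and R'_2 are 𝒦_t-free, and hence max{d_{K_s}(R'_1), d_{K_s}(R'_2)} ≥ d_{K_s}(R). -/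
open Filter

/-! A map `σ : Fin m → V` whose edge-weight product is nonzero meets `{v₁, v₂}` at most
once, since `w(v₁, v₂) = 0` and loops have weight `0`. For such `σ` the vertex-weight product
depends affinely on the weight of the single vertex it hits in `{v₁, v₂}`, and `α₁` times the
weights merged into `v₁` plus `α₂` times those merged into `v₂` gives back `w` at both vertices,
so the densities combine term by term. `𝒦_t`-freeness passes to induced subgraphs, and a convex
combination of two densities is at most their maximum. -/

theorem Finset.sum_pi_subtype {ι α M : Type*} [Fintype ι] [DecidableEq ι] [Fintype α]
    [AddCommMonoid M] {p : α → Prop} [DecidablePred p] (F : (ι → α) → M)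
    (hF : ∀ σ : ι → α, (∃ i, ¬ p (σ i)) → F σ = 0) :
    ∑ τ : ι → {x // p x}, F (fun i => τ i) = ∑ σ, F σ := by
  rw [← Finset.sum_filter_of_ne (p := fun σ : ι → α => ∀ i, p (σ i)) fun σ _ hσ => by
      by_contra hc
      push Not at hc
      exact hσ (hF σ hc),
    ← Finset.sum_subtype_eq_sum_filter, Finset.subtype_univ]
  exact Equiv.sum_comp (Equiv.subtypePiEquivPi (p := fun _ x => p x)).symm
    fun σ : {σ : ι → α // ∀ i, p (σ i)} => F σ

theorem Finset.combo_prod_eq_prod_of_subsingleton {ι α M : Type*} [Fintype ι] [DecidableEq ι]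
    [CommSemiring M] {S : Set α} {f₁ f₂ g : α → M} {a₁ a₂ : M} (ha : a₁ + a₂ = 1)
    (hS : ∀ x ∈ S, a₁ * f₁ x + a₂ * f₂ x = g x)
    (hf₁ : ∀ x ∉ S, f₁ x = g x) (hf₂ : ∀ x ∉ S, f₂ x = g x)
    {σ : ι → α} (hσ : (σ ⁻¹' S).Subsingleton) :
    a₁ * ∏ i, f₁ (σ i) + a₂ * ∏ i, f₂ (σ i) = ∏ i, g (σ i) := by
  by_cases hhit : ∃ i₀, σ i₀ ∈ S
  · obtain ⟨i₀, hi₀⟩ := hhit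
    have hrest : ∀ f : α → M, (∀ x ∉ S, f x = g x) →
        ∏ i, f (σ i) = f (σ i₀) * ∏ i ∈ Finset.univ.erase i₀, g (σ i) := by
      intro f hf
      rw [← Finset.mul_prod_erase _ _ (Finset.mem_univ i₀)]
      refine congrArg _ (Finset.prod_congr rfl fun i hi => hf _ fun hiS => ?_)
      exact Finset.ne_of_mem_erase hi (hσ hiS hi₀)
    rw [hrest f₁ hf₁, hrest f₂ hf₂, hrest g fun _ _ => rfl, ← hS _ hi₀]
    ring
  · push Not at hhit
    have hg : ∀ f : α → M, (∀ x ∉ S, f x = g x) → ∏ i, f (σ i) = ∏ i, g (σ i) :=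
      fun f hf => Finset.prod_congr rfl fun i _ => hf _ (hhit i)
    rw [hg f₁ hf₁, hg f₂ hf₂, ← add_mul, ha, one_mul]

namespace WeightedGraph

variable {V : Type} [Fintype V]

def edgeProd (R : WeightedGraph V) {m : ℕ} (σ : Fin m → V) : ℝ :=
  ∏ p ∈ Finset.univ.filter (fun p : Fin m × Fin m => p.1 < p.2), R.ew (σ p.1) (σ p.2)

theorem density_eq_sum_edgeProd (R : WeightedGraph V) (m : ℕ) :
    R.density m = ∑ σ : Fin m → V, (∏ i, R.vw (σ i)) * R.edgeProd σ :=
  rfl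

theorem edgeProd_eq_zero (R : WeightedGraph V) {m : ℕ} {σ : Fin m → V} {i j : Fin m}
    (hij : i ≠ j) (h : R.ew (σ i) (σ j) = 0) : R.edgeProd σ = 0 := by
  rcases hij.lt_or_gt with hlt | hlt
  · exact Finset.prod_eq_zero (i := (i, j)) (by simp [hlt]) h
  · exact Finset.prod_eq_zero (i := (j, i)) (by simp [hlt]) (by rwa [R.ew_symm])

theorem subsingleton_preimage_of_edgeProd_ne_zero (R : WeightedGraph V) {S : Set V}
    (hS : ∀ x ∈ S, ∀ y ∈ S, R.ew x y = 0) {m : ℕ} {σ : Fin m → V}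
    (h : R.edgeProd σ ≠ 0) :
    (σ ⁻¹' S).Subsingleton := fun i hi j hj => by
  by_contra hij
  exact h (R.edgeProd_eq_zero hij (hS _ hi _ hj))

theorem ew_eq_zero_of_mem_pair (R : WeightedGraph V) {v₁ v₂ : V} (hzero : R.ew v₁ v₂ = 0) :
    ∀ x ∈ ({v₁, v₂} : Set V), ∀ y ∈ ({v₁, v₂} : Set V), R.ew x y = 0 := by
  rintro x (rfl | rfl) y (rfl | rfl)
  · exact R.ew_self _
  · exact hzero
  · rwa [R.ew_symm]
  · exact R.ew_self _

theorem density_subtype (R : WeightedGraph V) {p : V → Prop} [DecidablePred p]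
    (R' : WeightedGraph {x // p x}) (u : V → ℝ) (hu : ∀ x, ¬ p x → u x = 0)
    (hvw : ∀ x, R'.vw x = u x) (hew : ∀ x y, R'.ew x y = R.ew x y) (m : ℕ) :
    R'.density m = ∑ σ : Fin m → V, (∏ i, u (σ i)) * R.edgeProd σ := by
  rw [← Finset.sum_pi_subtype (p := p) (fun σ => (∏ i, u (σ i)) * R.edgeProd σ)]
  · simp only [density_eq_sum_edgeProd, edgeProd, hvw, hew]
  · rintro σ ⟨i, hi⟩
    rw [Finset.prod_eq_zero (Finset.mem_univ i) (hu _ hi), zero_mul]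

theorem isClique_map_of_ew_eq {W : Type} [Fintype W] {R : WeightedGraph V}
    {R' : WeightedGraph W} (f : W ↪ V) (hew : ∀ x y, R'.ew x y = R.ew (f x) (f y)) {α : ℝ}
    {S : Finset W} (hS : (R'.gtGraph α).IsClique (S : Set W)) :
    (R.gtGraph α).IsClique (S.map f : Set V) := by
  have hcomap : R'.gtGraph α = (R.gtGraph α).comap f := by
    ext x y
    simp [gtGraph, hew]
  rw [Finset.coe_map]
  exact (hcomap ▸ hS).map.mono (SimpleGraph.map_comap_le f _)

theorem KtFree.of_embedding {W : Type} [Fintype W] {R : WeightedGraph V}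
    {R' : WeightedGraph W} (f : W ↪ V) (hew : ∀ x y, R'.ew x y = R.ew (f x) (f y)) {t : ℕ}
    (h : R.KtFree t) : R'.KtFree t := by
  rintro ⟨S₁, S₂, hsub, hcard, hsum, hS₁, hS₂⟩
  exact h ⟨S₁.map f, S₂.map f, Finset.map_subset_map.mpr hsub, by simpa using hcard,
    by simpa using hsum, isClique_map_of_ew_eq f hew hS₁, isClique_map_of_ew_eq f hew hS₂⟩

theorem combo_density_merge_eq_density [DecidableEq V] (R : WeightedGraph V) {v₁ v₂ : V}
    (hne : v₁ ≠ v₂) (hzero : R.ew v₁ v₂ = 0) (hpos : 0 < R.vw v₁ + R.vw v₂)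
    (R₁' : WeightedGraph {x : V // x ≠ v₂})
    (h₁v : ∀ x : {x : V // x ≠ v₂},
      R₁'.vw x = if (x : V) = v₁ then R.vw v₁ + R.vw v₂ else R.vw x)
    (h₁e : ∀ x y : {x : V // x ≠ v₂}, R₁'.ew x y = R.ew x y)
    (R₂' : WeightedGraph {x : V // x ≠ v₁})
    (h₂v : ∀ x : {x : V // x ≠ v₁},
      R₂'.vw x = if (x : V) = v₂ then R.vw v₁ + R.vw v₂ else R.vw x)
    (h₂e : ∀ x y : {x : V // x ≠ v₁}, R₂'.ew x y = R.ew x y) (m : ℕ) :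
    R.vw v₁ / (R.vw v₁ + R.vw v₂) * R₁'.density m
      + R.vw v₂ / (R.vw v₁ + R.vw v₂) * R₂'.density m = R.density m := by
  set W := R.vw v₁ + R.vw v₂
  set u₁ := Function.update (Function.update R.vw v₂ 0) v₁ W
  set u₂ := Function.update (Function.update R.vw v₁ 0) v₂ W
  have hd₁ : R₁'.density m = ∑ σ : Fin m → V, (∏ i, u₁ (σ i)) * R.edgeProd σ :=
    R.density_subtype R₁' u₁ (fun x hx => by simp [u₁, not_not.mp hx, hne.symm])
      (fun x => by simp [u₁, h₁v, Function.update_apply, x.2]) h₁e m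
  have hd₂ : R₂'.density m = ∑ σ : Fin m → V, (∏ i, u₂ (σ i)) * R.edgeProd σ :=
    R.density_subtype R₂' u₂ (fun x hx => by simp [u₂, not_not.mp hx, hne])
      (fun x => by simp [u₂, h₂v, Function.update_apply, x.2]) h₂e m
  rw [hd₁, hd₂, density_eq_sum_edgeProd, Finset.mul_sum, Finset.mul_sum,
    ← Finset.sum_add_distrib]
  refine Finset.sum_congr rfl fun σ _ => ?_
  by_cases hE : R.edgeProd σ = 0
  · simp [hE]
  have hσ := R.subsingleton_preimage_of_edgeProd_ne_zero (R.ew_eq_zero_of_mem_pair hzero) hE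
  rw [← mul_assoc, ← mul_assoc, ← add_mul,
    Finset.combo_prod_eq_prod_of_subsingleton (f₁ := u₁) (f₂ := u₂) _ _ _ _ hσ]
  · rw [← add_div, div_self hpos.ne']
  · rintro x (rfl | rfl)
    · simp [u₁, u₂, hne, hpos.ne']
    · simp [u₁, u₂, hne.symm, hpos.ne']
  all_goals
    intro x hx
    simp only [Set.mem_insert_iff, Set.mem_singleton_iff, not_or] at hx
    simp [u₁, u₂, hx.1, hx.2]

end WeightedGraph

theorem symmetrization_zero_edge {V : Type} [Fintype V] [DecidableEq V]
    (R : WeightedGraph V) (v₁ v₂ : V) (hne : v₁ ≠ v₂)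
    (hzero : R.ew v₁ v₂ = 0) (hpos : 0 < R.vw v₁ + R.vw v₂)
    (R₁' : WeightedGraph {x : V // x ≠ v₂})
    (h₁v : ∀ x : {x : V // x ≠ v₂},
      R₁'.vw x = if (x : V) = v₁ then R.vw v₁ + R.vw v₂ else R.vw x)
    (h₁e : ∀ x y : {x : V // x ≠ v₂}, R₁'.ew x y = R.ew x y)
    (R₂' : WeightedGraph {x : V // x ≠ v₁})
    (h₂v : ∀ x : {x : V // x ≠ v₁},
      R₂'.vw x = if (x : V) = v₂ then R.vw v₁ + R.vw v₂ else R.vw x)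
    (h₂e : ∀ x y : {x : V // x ≠ v₁}, R₂'.ew x y = R.ew x y) :
    (∀ s : ℕ, 1 ≤ s →
      R.vw v₁ / (R.vw v₁ + R.vw v₂) * R₁'.density s
        + R.vw v₂ / (R.vw v₁ + R.vw v₂) * R₂'.density s = R.density s) ∧
    (∀ t : ℕ, R.KtFree t →
      R₁'.KtFree t ∧ R₂'.KtFree t ∧
      ∀ s : ℕ, 1 ≤ s → R.density s ≤ max (R₁'.density s) (R₂'.density s)) := by
  have hcombo := R.combo_density_merge_eq_density hne hzero hpos R₁' h₁v h₁e R₂' h₂v h₂e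
  refine ⟨fun s _ => hcombo s, fun t hfree =>
    ⟨hfree.of_embedding (Function.Embedding.subtype _) h₁e,
      hfree.of_embedding (Function.Embedding.subtype _) h₂e, fun s _ => ?_⟩⟩
  rw [← hcombo s]
  exact Convex.combo_le_max _ _ (div_nonneg (R.vw_nonneg v₁) hpos.le)
    (div_nonneg (R.vw_nonneg v₂) hpos.le) (by rw [← add_div, div_self hpos.ne'])
end

section
/- Fix a positive integer m. There exist real constants c_r > 0 for 0 ≤ r ≤ ⌊m/2⌋ such that for all positive integers P,Q and all real numbers p,q, the identity (m!/2^{C(m,2)})·∑_{x+y=m} C(P,x)·C(Q,y)·p^x·q^y·2^{xy} = ∑_{r=0}^{⌊m/2⌋} c_r·N_{m,r}(p,P;q,Q) holds. (The left-hand side equals d_{K_m}(R(p,P;q,Q)) whenever p,q ∈ (0,1) with pP+qQ = 1.) -/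
/-- `N_{m,r}(p,P;q,Q) = ∑_{x+y=m, x,y ≥ r} C(P,x) p^x C(Q,y) q^y · x!y!/((x−r)!(y−r)!)`. -/
noncomputable def Nmr (m r P Q : ℕ) (p q : ℝ) : ℝ :=
  ∑ x ∈ Finset.Icc r (m - r),
    (P.choose x : ℝ) * p ^ x * (Q.choose (m - x) : ℝ) * q ^ (m - x) *
      ((x.factorial : ℝ) * ((m - x).factorial : ℝ) /
        (((x - r).factorial : ℝ) * ((m - x - r).factorial : ℝ)))

/-!
Expand `2 ^ (x * (m - x)) = ∑_{r ≤ m/2} C(x,r) C(m-x,r) d_r`; since `x!/(x-r)! = r! C(x,r)`,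
this turns the left side into `∑_r (m!/2^C(m,2)) (d_r / r!²) N_{m,r}`. The rows `t ≤ m/2` of the
expansion form a triangular system in `d_0, …, d_{m/2}` with diagonal entries `C(m-t,t) > 0`
(the rows `t > m/2` follow by the symmetry `x ↔ m - x`), so it has a solution. The solution is
positive by induction: for `r ≤ t`, `C(t+1,r) C(m-t-1,r) ≤ 2^(m-2t-1) C(t,r) C(m-t,r)`, strictly
for `r = 0`, so the known part of row `t+1` is smaller than
`2^(m-2t-1) 2^(t(m-t)) = 2^((t+1)(m-t-1))`.
-/

open Finset

theorem choose_mul_choose_succ_le {n k r : ℕ} (hr : r ≤ n) (hnk : n < k) :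
    (n + 1).choose r * k.choose r ≤ 2 ^ (k - n) * (n.choose r * (k + 1).choose r) := by
  obtain ⟨a, rfl⟩ := Nat.exists_eq_add_of_le hr
  obtain ⟨e, rfl⟩ := Nat.exists_eq_add_of_lt hnk
  have hn := Nat.choose_mul_succ_eq (r + a) r
  have hk := Nat.choose_mul_succ_eq (r + a + e + 1) r
  rw [show r + a + 1 - r = a + 1 by omega] at hn
  rw [show r + a + e + 1 + 1 - r = a + e + 2 by omega] at hk
  rw [show r + a + e + 1 - (r + a) = e + 1 by omega]
  have hratio : (r + a + 1) * (a + e + 2) ≤ 2 ^ (e + 1) * ((a + 1) * (r + a + e + 1 + 1)) :=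
    calc (r + a + 1) * (a + e + 2) ≤ (r + a + e + 1 + 1) * ((a + 1) * (e + 2)) :=
          Nat.mul_le_mul (by omega) (by nlinarith)
      _ ≤ (r + a + e + 1 + 1) * ((a + 1) * 2 ^ (e + 1)) := by
          gcongr; exact Nat.lt_two_pow_self
      _ = 2 ^ (e + 1) * ((a + 1) * (r + a + e + 1 + 1)) := by ring
  refine Nat.le_of_mul_le_mul_right ?_ (by positivity : 0 < (a + 1) * (r + a + e + 1 + 1))
  calc (r + a + 1).choose r * (r + a + e + 1).choose r * ((a + 1) * (r + a + e + 1 + 1))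
      = (r + a + 1).choose r * (a + 1) * ((r + a + e + 1).choose r * (r + a + e + 1 + 1)) := by
        ring
    _ = (r + a).choose r * (r + a + e + 1 + 1).choose r * ((r + a + 1) * (a + e + 2)) := by
        rw [← hn, hk]; ring
    _ ≤ (r + a).choose r * (r + a + e + 1 + 1).choose r *
          (2 ^ (e + 1) * ((a + 1) * (r + a + e + 1 + 1))) := Nat.mul_le_mul_left _ hratio
    _ = _ := by ring

noncomputable def twoPowCoeff (m t : ℕ) : ℝ :=
  (2 ^ (t * (m - t)) - ∑ r : Fin t, (t.choose r * (m - t).choose r : ℝ) * twoPowCoeff m r) /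
    (m - t).choose t

theorem twoPowCoeff_eq (m t : ℕ) :
    twoPowCoeff m t = (2 ^ (t * (m - t)) -
      ∑ r ∈ range t, (t.choose r * (m - t).choose r : ℝ) * twoPowCoeff m r) / (m - t).choose t := by
  rw [twoPowCoeff, ← Fin.sum_univ_eq_sum_range]

theorem sum_choose_mul_choose_mul_twoPowCoeff {m t : ℕ} (ht : 2 * t ≤ m) :
    ∑ r ∈ range (t + 1), (t.choose r * (m - t).choose r : ℝ) * twoPowCoeff m r =
      2 ^ (t * (m - t)) := by
  have hC : ((m - t).choose t : ℝ) ≠ 0 := by exact_mod_cast (Nat.choose_pos (by omega)).ne'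
  rw [sum_range_succ, twoPowCoeff_eq m t, Nat.choose_self,
    Nat.cast_one, one_mul, mul_div_cancel₀ _ hC]
  ring

theorem sum_choose_mul_choose_mul_twoPowCoeff_lt {m s : ℕ} (hs : 2 * s + 2 ≤ m)
    (hpos : ∀ r ≤ s, 0 < twoPowCoeff m r) :
    ∑ r ∈ range (s + 1), ((s + 1).choose r * (m - (s + 1)).choose r : ℝ) * twoPowCoeff m r <
      2 ^ ((s + 1) * (m - (s + 1))) := by
  have hm : m - s = m - (s + 1) + 1 := by omega
  have hgap : (1 : ℝ) < 2 ^ (m - (s + 1) - s) := one_lt_pow₀ one_lt_two (by omega)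
  calc ∑ r ∈ range (s + 1), ((s + 1).choose r * (m - (s + 1)).choose r : ℝ) * twoPowCoeff m r
      < ∑ r ∈ range (s + 1),
          2 ^ (m - (s + 1) - s) * ((s.choose r * (m - s).choose r : ℝ) * twoPowCoeff m r) := by
        refine sum_lt_sum (fun r hr => ?_) ⟨0, by simp, ?_⟩
        · have hr : r ≤ s := Nat.lt_succ_iff.mp (mem_range.mp hr)
          have hchoose : ((s + 1).choose r * (m - (s + 1)).choose r : ℝ) ≤
              2 ^ (m - (s + 1) - s) * (s.choose r * (m - (s + 1) + 1).choose r) := by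
            exact_mod_cast choose_mul_choose_succ_le hr (by omega)
          rw [← mul_assoc, hm]
          exact mul_le_mul_of_nonneg_right hchoose (hpos r hr).le
        · simpa using (lt_mul_iff_one_lt_left (hpos 0 (Nat.zero_le s))).mpr hgap
    _ = 2 ^ (m - (s + 1) - s) * 2 ^ (s * (m - s)) := by
        rw [← mul_sum, sum_choose_mul_choose_mul_twoPowCoeff (by omega)]
    _ = 2 ^ ((s + 1) * (m - (s + 1))) := by
        rw [← pow_add]
        obtain ⟨e, rfl⟩ := Nat.exists_eq_add_of_le hs
        congr 1
        rw [show 2 * s + 2 + e - (s + 1) = s + 1 + e by omega,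
          show 2 * s + 2 + e - s = s + 2 + e by omega]
        ring_nf; omega

theorem twoPowCoeff_pos {m t : ℕ} (ht : 2 * t ≤ m) : 0 < twoPowCoeff m t := by
  induction t using Nat.strong_induction_on with
  | _ t ih =>
    rcases t with _ | s
    · rw [twoPowCoeff]; simp
    · rw [twoPowCoeff_eq]
      have hlt := sum_choose_mul_choose_mul_twoPowCoeff_lt (by omega)
        (fun r hr => ih r (by omega) (by omega))
      have hC : (0 : ℝ) < (m - (s + 1)).choose (s + 1) := by
        exact_mod_cast Nat.choose_pos (by omega)
      exact div_pos (sub_pos.mpr hlt) hC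

theorem sum_range_half_choose_mul_choose_mul_twoPowCoeff {m x : ℕ} (hx : x ≤ m) :
    ∑ r ∈ range (m / 2 + 1), (x.choose r * (m - x).choose r : ℝ) * twoPowCoeff m r =
      2 ^ (x * (m - x)) := by
  wlog hxm : 2 * x ≤ m generalizing x
  · have h := this (Nat.sub_le m x) (by omega)
    rw [Nat.sub_sub_self hx, mul_comm (m - x)] at h
    simpa only [mul_comm ((m - x).choose _ : ℝ)] using h
  rw [← sum_choose_mul_choose_mul_twoPowCoeff hxm]
  refine (sum_subset (range_subset_range.mpr (by omega)) fun r _ hr => ?_).symm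
  rw [Nat.choose_eq_zero_of_lt (by simpa using hr)]
  simp

theorem factorial_div_factorial_sub {n r : ℕ} (h : r ≤ n) :
    (n.factorial : ℝ) / (n - r).factorial = r.factorial * n.choose r := by
  rw [div_eq_iff (by positivity), ← Nat.factorial_mul_descFactorial h,
    Nat.descFactorial_eq_factorial_mul_choose]
  push_cast
  ring

theorem Nmr_eq_factorial_sq_mul_sum (m r P Q : ℕ) (p q : ℝ) :
    Nmr m r P Q p q = r.factorial ^ 2 * ∑ x ∈ range (m + 1),
      P.choose x * p ^ x * Q.choose (m - x) * q ^ (m - x) * (x.choose r * (m - x).choose r) := by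
  rw [Nmr, mul_sum]
  symm
  refine (sum_subset (fun x hx => ?_) fun x hxm hx => ?_).symm.trans (sum_congr rfl fun x hx => ?_)
  · simp only [mem_Icc, mem_range] at hx ⊢
    omega
  · simp only [mem_Icc, not_and_or, not_le] at hx
    rcases hx with hxr | hxr
    · simp [Nat.choose_eq_zero_of_lt hxr]
    · have : m - x < r := by rw [mem_range] at hxm; omega
      simp [Nat.choose_eq_zero_of_lt this]
  · obtain ⟨hrx, hxm⟩ := mem_Icc.mp hx
    rw [mul_div_mul_comm, factorial_div_factorial_sub hrx,
      factorial_div_factorial_sub (by omega : r ≤ m - x)]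
    ring

theorem density_eq_positive_combination_Nmr_general (m : ℕ) :
    ∃ c : ℕ → ℝ, (∀ r : ℕ, r ≤ m / 2 → 0 < c r) ∧
      ∀ (P Q : ℕ), 0 < P → 0 < Q → ∀ p q : ℝ,
        (m.factorial : ℝ) / 2 ^ m.choose 2 *
            ∑ x ∈ Finset.range (m + 1),
              (P.choose x : ℝ) * (Q.choose (m - x) : ℝ) * p ^ x * q ^ (m - x)
                * 2 ^ (x * (m - x))
          = ∑ r ∈ Finset.range (m / 2 + 1), c r * Nmr m r P Q p q := by
  set K : ℝ := (m.factorial : ℝ) / 2 ^ m.choose 2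
  refine ⟨fun r => K * twoPowCoeff m r / r.factorial ^ 2, fun r hr => ?_, fun P Q _ _ p q => ?_⟩
  · have := twoPowCoeff_pos (m := m) (t := r) (by omega)
    positivity
  calc K * ∑ x ∈ range (m + 1),
        (P.choose x : ℝ) * Q.choose (m - x) * p ^ x * q ^ (m - x) * 2 ^ (x * (m - x))
      = ∑ x ∈ range (m + 1), ∑ r ∈ range (m / 2 + 1), K * twoPowCoeff m r *
          (P.choose x * p ^ x * Q.choose (m - x) * q ^ (m - x) *
            (x.choose r * (m - x).choose r)) := by
        rw [mul_sum]
        refine sum_congr rfl fun x hx => ?_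
        rw [← sum_range_half_choose_mul_choose_mul_twoPowCoeff
          (Nat.lt_succ_iff.mp (mem_range.mp hx))]
        simp only [mul_sum]
        exact sum_congr rfl fun r _ => by ring
    _ = ∑ r ∈ range (m / 2 + 1), K * twoPowCoeff m r * ∑ x ∈ range (m + 1),
          P.choose x * p ^ x * Q.choose (m - x) * q ^ (m - x) *
            (x.choose r * (m - x).choose r) := by
        rw [sum_comm]
        simp only [mul_sum]
    _ = ∑ r ∈ range (m / 2 + 1), K * twoPowCoeff m r / r.factorial ^ 2 * Nmr m r P Q p q :=
        sum_congr rfl fun r _ => by rw [Nmr_eq_factorial_sq_mul_sum]; field_simp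

theorem density_eq_positive_combination_Nmr (m : ℕ) (hm : 0 < m) :
    ∃ c : ℕ → ℝ, (∀ r : ℕ, r ≤ m / 2 → 0 < c r) ∧
      ∀ (P Q : ℕ), 0 < P → 0 < Q → ∀ p q : ℝ,
        (m.factorial : ℝ) / 2 ^ m.choose 2 *
            ∑ x ∈ Finset.range (m + 1),
              (P.choose x : ℝ) * (Q.choose (m - x) : ℝ) * p ^ x * q ^ (m - x)
                * 2 ^ (x * (m - x))
          = ∑ r ∈ Finset.range (m / 2 + 1), c r * Nmr m r P Q p q :=
  density_eq_positive_combination_Nmr_general m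
end

section
/- Let P,Q be positive integers with P ≥ Q+2 and let p,q ∈ (0,1) be real numbers with Pp + Qq = 1 and (P−1)p ≤ Qq. Set p' = Pp/(P−1) and q' = Qq/(Q+1). Then: (1) for every integer r with 0 < r ≤ Q, (1 − r/P)(1 − r/Q) < (1 − r/(P−1))(1 − r/(Q+1)); (2) p ≤ min{p',q'} and max{p',q'} < q; (3) for every integer r with 0 < r ≤ Q, (P−r)p + (Q−r)q < (P−1−r)p' + (Q+1−r)q'. -/
/-!
Write `p' = p + p / (P - 1)` and `q' = q - q / (Q + 1)`. Everything rests on `p < q`, which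
follows from `(P - 1) p ≤ Q q < (P - 1) q`, and its consequence `(Q + 1) p < (Q + 1) q ≤ (P - 1) q`,
i.e. `p / (P - 1) < q / (Q + 1)`: passing from `(P, Q, p, q)` to `(P - 1, Q + 1, p', q')` adds less
to `p` than it takes off `q`, which is inequality (3). Inequality (1) is the polynomial identity
`(P-1-r)(Q+1-r) P Q - (P-r)(Q-r)(P-1)(Q+1) = r (P-Q-1)(P+Q-r)`.
-/

theorem one_sub_div_mul_one_sub_div_lt {P Q r : ℝ} (hr : 0 < r) (hrQ : r ≤ Q) (hPQ : Q + 1 < P) :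
    (1 - r / P) * (1 - r / Q) < (1 - r / (P - 1)) * (1 - r / (Q + 1)) := by
  have hQ : 0 < Q := hr.trans_le hrQ
  have hP : 0 < P - 1 := by linarith
  rw [one_sub_div (by linarith : 0 < P).ne', one_sub_div hQ.ne', one_sub_div hP.ne',
    one_sub_div (by positivity), div_mul_div_comm, div_mul_div_comm,
    div_lt_div_iff₀ (by nlinarith) (by positivity)]
  have hpos : 0 < r * (P - Q - 1) * (P + Q - r) := by
    apply mul_pos (mul_pos hr _) <;> linarith
  linarith [show (P - 1 - r) * (Q + 1 - r) * (P * Q) - (P - r) * (Q - r) * ((P - 1) * (Q + 1))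
    = r * (P - Q - 1) * (P + Q - r) by ring]

theorem le_mul_div_sub_one {P p : ℝ} (hP : 1 < P) (hp : 0 ≤ p) : p ≤ P * p / (P - 1) := by
  rw [le_div_iff₀ (by linarith)]
  linarith

theorem mul_div_add_one_lt {Q q : ℝ} (hQ : 0 ≤ Q) (hq : 0 < q) : Q * q / (Q + 1) < q := by
  rw [div_lt_iff₀ (by linarith)]
  linarith

theorem sub_mul_add_sub_mul_lt {P Q p q r : ℝ} (hP : P - 1 ≠ 0) (hQ : Q + 1 ≠ 0) (hr : 0 < r)
    (h : p / (P - 1) < q / (Q + 1)) :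
    (P - r) * p + (Q - r) * q
      < (P - 1 - r) * (P * p / (P - 1)) + (Q + 1 - r) * (Q * q / (Q + 1)) := by
  have hgap : 0 < r * (q / (Q + 1) - p / (P - 1)) := mul_pos hr (sub_pos.2 h)
  have : (P - 1 - r) * (P * p / (P - 1)) + (Q + 1 - r) * (Q * q / (Q + 1))
      - ((P - r) * p + (Q - r) * q) = r * (q / (Q + 1) - p / (P - 1)) := by
    field_simp
    ring
  linarith

section

variable {P Q p q : ℝ}

theorem lt_of_sub_one_mul_le (hQ : 0 ≤ Q) (hPQ : Q + 2 ≤ P) (hq : 0 < q)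
    (hle : (P - 1) * p ≤ Q * q) : p < q :=
  lt_of_mul_lt_mul_left (hle.trans_lt (by nlinarith)) (by linarith : (0 : ℝ) ≤ P - 1)

theorem mul_div_sub_one_lt (hQ : 0 ≤ Q) (hPQ : Q + 2 ≤ P) (hq : 0 < q)
    (hle : (P - 1) * p ≤ Q * q) : P * p / (P - 1) < q := by
  have := lt_of_sub_one_mul_le hQ hPQ hq hle
  rw [div_lt_iff₀ (by linarith)]
  nlinarith

theorem add_one_mul_le_mul (hPQ : Q + 2 ≤ P) (hp : 0 ≤ p) (hle : (P - 1) * p ≤ Q * q) :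
    (Q + 1) * p ≤ Q * q :=
  le_trans (by nlinarith) hle

theorem le_mul_div_add_one (hQ : 0 ≤ Q) (hPQ : Q + 2 ≤ P) (hp : 0 ≤ p)
    (hle : (P - 1) * p ≤ Q * q) : p ≤ Q * q / (Q + 1) := by
  rw [le_div_iff₀ (by linarith)]
  linarith [add_one_mul_le_mul hPQ hp hle]

theorem div_sub_one_lt_div_add_one (hQ : 0 ≤ Q) (hPQ : Q + 2 ≤ P) (hq : 0 < q)
    (hle : (P - 1) * p ≤ Q * q) : p / (P - 1) < q / (Q + 1) := by
  have := lt_of_sub_one_mul_le hQ hPQ hq hle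
  rw [div_lt_div_iff₀ (by linarith) (by linarith)]
  nlinarith

end

theorem pq_inequalities_general (P Q : ℕ) (hPQ : Q + 2 ≤ P)
    (p q : ℝ) (hp : p ∈ Set.Ioo (0:ℝ) 1) (hq : q ∈ Set.Ioo (0:ℝ) 1)
    (hle : ((P : ℝ) - 1) * p ≤ (Q : ℝ) * q) :
    (∀ r : ℕ, 0 < r → r ≤ Q →
      (1 - (r : ℝ) / P) * (1 - (r : ℝ) / Q)
        < (1 - (r : ℝ) / ((P : ℝ) - 1)) * (1 - (r : ℝ) / ((Q : ℝ) + 1))) ∧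
    (p ≤ min ((P : ℝ) * p / ((P : ℝ) - 1)) ((Q : ℝ) * q / ((Q : ℝ) + 1)) ∧
      max ((P : ℝ) * p / ((P : ℝ) - 1)) ((Q : ℝ) * q / ((Q : ℝ) + 1)) < q) ∧
    (∀ r : ℕ, 0 < r → r ≤ Q →
      ((P : ℝ) - r) * p + ((Q : ℝ) - r) * q
        < ((P : ℝ) - 1 - r) * ((P : ℝ) * p / ((P : ℝ) - 1))
          + ((Q : ℝ) + 1 - r) * ((Q : ℝ) * q / ((Q : ℝ) + 1))) := by
  have hQ : (0 : ℝ) ≤ Q := Q.cast_nonneg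
  have hPQ' : (Q : ℝ) + 2 ≤ P := by exact_mod_cast hPQ
  refine ⟨fun r hr hrQ => ?_, ⟨le_min ?_ ?_, max_lt ?_ ?_⟩, fun r hr _ => ?_⟩
  · exact one_sub_div_mul_one_sub_div_lt (by exact_mod_cast hr) (by exact_mod_cast hrQ)
      (by linarith)
  · exact le_mul_div_sub_one (by linarith) hp.1.le
  · exact le_mul_div_add_one hQ hPQ' hp.1.le hle
  · exact mul_div_sub_one_lt hQ hPQ' hq.1 hle
  · exact mul_div_add_one_lt hQ hq.1
  · exact sub_mul_add_sub_mul_lt (by linarith) (by linarith) (by exact_mod_cast hr)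
      (div_sub_one_lt_div_add_one hQ hPQ' hq.1 hle)

theorem pq_inequalities (P Q : ℕ) (hQ : 0 < Q) (hPQ : Q + 2 ≤ P)
    (p q : ℝ) (hp : p ∈ Set.Ioo (0:ℝ) 1) (hq : q ∈ Set.Ioo (0:ℝ) 1)
    (hsum : (P : ℝ) * p + (Q : ℝ) * q = 1)
    (hle : ((P : ℝ) - 1) * p ≤ (Q : ℝ) * q) :
    (∀ r : ℕ, 0 < r → r ≤ Q →
      (1 - (r : ℝ) / P) * (1 - (r : ℝ) / Q)
        < (1 - (r : ℝ) / ((P : ℝ) - 1)) * (1 - (r : ℝ) / ((Q : ℝ) + 1))) ∧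
    (p ≤ min ((P : ℝ) * p / ((P : ℝ) - 1)) ((Q : ℝ) * q / ((Q : ℝ) + 1)) ∧
      max ((P : ℝ) * p / ((P : ℝ) - 1)) ((Q : ℝ) * q / ((Q : ℝ) + 1)) < q) ∧
    (∀ r : ℕ, 0 < r → r ≤ Q →
      ((P : ℝ) - r) * p + ((Q : ℝ) - r) * q
        < ((P : ℝ) - 1 - r) * ((P : ℝ) * p / ((P : ℝ) - 1))
          + ((Q : ℝ) + 1 - r) * ((Q : ℝ) * q / ((Q : ℝ) + 1))) :=
  pq_inequalities_general P Q hPQ p q hp hq hle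
end
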